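/- arXiv:2604.23621 — 7 statements merged into one kernel-verified Lean document; each statement's English description precedes it below -/
import Mathlib

section
/- Let L > 0 and let γ : [0, L] → ℝ³ be a continuous map with γ(0) = γ(L) that is injective on [0, L) and has finite total variation V = eVariationOn γ [0, L]. Then V > 2 · Metric.diam (γ '' [0, L]); that is, the length–diameter inequality is strict for embedded simple closed curves, so the infimal ratio 2 of length to diameter is never attained by a simple closed curve. -/
/-!
Let `γ a`, `γ b` realise the diameter `D`. The triangle `γ a, γ t, γ b` inscribed in the curve has
perimeter at most the length, so if the length were at most `2 D`, every point `γ t` would satisfy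
`dist (γ a) (γ t) + dist (γ t) (γ b) = D`, i.e. lie on the segment `[γ a, γ b]` (strict convexity).
On that segment a point is determined by its distance to `γ a`, so `t ↦ dist (γ a) (γ t)` would be
a continuous real function, injective on `[0, L)` and equal at `0` and `L`: impossible.
-/

open Set

theorem IsCompact.exists_dist_eq_diam {E : Type*} [PseudoMetricSpace E] {s : Set E}
    (hs : IsCompact s) (hne : s.Nonempty) : ∃ x ∈ s, ∃ y ∈ s, dist x y = Metric.diam s := by
  obtain ⟨⟨x, y⟩, ⟨hx, hy⟩, hmax⟩ :=
    (hs.prod hs).exists_isMaxOn (hne.prod hne) continuous_dist.continuousOn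
  refine ⟨x, hx, y, hy, le_antisymm (Metric.dist_le_diam_of_mem hs.isBounded hx hy) ?_⟩
  exact Metric.diam_le_of_forall_dist_le dist_nonneg fun p hp q hq => hmax (mk_mem_prod hp hq)

theorem injOn_dist_affineSegment {V P : Type*} [NormedAddCommGroup V] [NormedSpace ℝ V]
    [MetricSpace P] [NormedAddTorsor V P] (p q : P) :
    InjOn (dist p) (affineSegment ℝ p q) := by
  rcases eq_or_ne p q with rfl | hpq
  · simp [affineSegment_same]
  · refine InjOn.image_of_comp fun s hs t ht hst => ?_
    simp only [Function.comp_apply, dist_left_lineMap, Real.norm_eq_abs, abs_of_nonneg hs.1,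
      abs_of_nonneg ht.1] at hst
    exact mul_right_cancel₀ (dist_ne_zero.2 hpq) hst

theorem ContinuousOn.not_injOn_Ico_of_apply_eq {α δ : Type*} [ConditionallyCompleteLinearOrder α]
    [TopologicalSpace α] [OrderTopology α] [DenselyOrdered α] [LinearOrder δ] [TopologicalSpace δ]
    [OrderClosedTopology δ] [DenselyOrdered δ] {f : α → δ} {a b : α} (hab : a < b)
    (hf : ContinuousOn f (Icc a b)) (hfab : f a = f b) : ¬ InjOn f (Ico a b) := by
  intro hinj
  obtain ⟨m, ham, hmb⟩ := exists_between hab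
  have hfam : f a ≠ f m := hinj.ne (left_mem_Ico.2 hab) ⟨ham.le, hmb⟩ ham.ne
  obtain ⟨c, hc⟩ : (uIoo (f a) (f m)).Nonempty := exists_between (min_lt_max.2 hfam)
  have hc' : c ∈ uIoo (f m) (f b) := by rwa [← hfab, uIoo_comm]
  obtain ⟨t₁, ht₁, rfl⟩ := intermediate_value_uIcc
    (hf.mono (by rw [uIcc_of_le ham.le]; exact Icc_subset_Icc_right hmb.le))
    (uIoo_subset_uIcc_self hc)
  obtain ⟨t₂, ht₂, hft⟩ := intermediate_value_uIcc
    (hf.mono (by rw [uIcc_of_le hmb.le]; exact Icc_subset_Icc_left ham.le))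
    (uIoo_subset_uIcc_self hc')
  rw [uIcc_of_le ham.le] at ht₁
  rw [uIcc_of_le hmb.le] at ht₂
  have ht₁m : t₁ < m := ht₁.2.lt_of_ne (by rintro rfl; exact right_notMem_uIoo hc)
  have ht₂b : t₂ < b := ht₂.2.lt_of_ne (by rintro rfl; exact right_notMem_uIoo (hft ▸ hc'))
  exact (ht₁m.trans_le ht₂.1).ne' (hinj ⟨ham.le.trans ht₂.1, ht₂b⟩
    ⟨ht₁.1, ht₁m.trans hmb⟩ hft)

theorem eVariationOn.edist_add_edist_add_edist_le_of_apply_eq {α E : Type*} [LinearOrder α]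
    [PseudoEMetricSpace E] {f : α → E} {a b s t u : α} (hf : f a = f b) (has : a ≤ s)
    (hst : s ≤ t) (htu : t ≤ u) (hub : u ≤ b) :
    edist (f s) (f t) + edist (f t) (f u) + edist (f u) (f s) ≤ eVariationOn f (Icc a b) := by
  have split {x y z : α} (hxy : x ≤ y) (hyz : y ≤ z) :
      eVariationOn f (Icc x y) + eVariationOn f (Icc y z) = eVariationOn f (Icc x z) := by
    simpa using eVariationOn.Icc_add_Icc f (s := univ) hxy hyz (mem_univ y)
  have edist_le {x y : α} (hxy : x ≤ y) : edist (f x) (f y) ≤ eVariationOn f (Icc x y) :=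
    eVariationOn.edist_le f (left_mem_Icc.2 hxy) (right_mem_Icc.2 hxy)
  calc edist (f s) (f t) + edist (f t) (f u) + edist (f u) (f s)
      ≤ edist (f s) (f t) + edist (f t) (f u) + (edist (f u) (f b) + edist (f a) (f s)) := by
        gcongr
        rw [hf]
        exact edist_triangle _ _ _
    _ ≤ eVariationOn f (Icc s t) + eVariationOn f (Icc t u)
          + (eVariationOn f (Icc u b) + eVariationOn f (Icc a s)) := by
        gcongr <;> exact edist_le ‹_›
    _ = eVariationOn f (Icc a b) := by
        rw [← split has (hst.trans (htu.trans hub)), ← split hst (htu.trans hub), ← split htu hub]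
        ring

theorem dist_add_dist_eq_of_eVariationOn_le_two_mul_edist {α E : Type*} [LinearOrder α]
    [PseudoMetricSpace E] {f : α → E} {a b x y : α} (hf : f a = f b) (hx : x ∈ Icc a b)
    (hy : y ∈ Icc a b) (hV : eVariationOn f (Icc a b) ≤ 2 * edist (f x) (f y)) {t : α}
    (ht : t ∈ Icc a b) : dist (f x) (f t) + dist (f t) (f y) = dist (f x) (f y) := by
  wlog hxy : x ≤ y generalizing x y
  · rw [dist_comm, add_comm, dist_comm (f t), dist_comm (f x)]
    exact this hy hx (by rwa [edist_comm]) (le_of_not_ge hxy)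
  have hperim : edist (f x) (f t) + edist (f t) (f y) + edist (f x) (f y) ≤
      eVariationOn f (Icc a b) := by
    rcases le_total t x with htx | hxt
    · convert eVariationOn.edist_add_edist_add_edist_le_of_apply_eq hf ht.1 htx hxy hy.2 using 1
      simp only [edist_comm, add_comm, add_left_comm]
    rcases le_total t y with hty | hyt
    · convert eVariationOn.edist_add_edist_add_edist_le_of_apply_eq hf hx.1 hxt hty hy.2 using 1
      simp only [edist_comm, add_comm, add_left_comm]
    · convert eVariationOn.edist_add_edist_add_edist_le_of_apply_eq hf hx.1 hxy hyt ht.2 using 1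
      simp only [edist_comm, add_comm, add_left_comm]
  have hle : edist (f x) (f t) + edist (f t) (f y) ≤ edist (f x) (f y) :=
    ENNReal.le_of_add_le_add_right (edist_ne_top _ _) ((hperim.trans hV).trans_eq (two_mul _))
  simp only [edist_dist, ← ENNReal.ofReal_add dist_nonneg dist_nonneg] at hle
  exact le_antisymm ((ENNReal.ofReal_le_ofReal_iff dist_nonneg).1 hle) (dist_triangle _ _ _)

theorem length_gt_two_diam_of_simple_general
    (L : ℝ) (hL : 0 < L) (γ : ℝ → EuclideanSpace ℝ (Fin 3))
    (hγ : ContinuousOn γ (Set.Icc 0 L)) (hclosed : γ 0 = γ L)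
    (hinj : Set.InjOn γ (Set.Ico 0 L)) :
    2 * ENNReal.ofReal (Metric.diam (γ '' Set.Icc 0 L)) <
      eVariationOn γ (Set.Icc 0 L) := by
  obtain ⟨_, ⟨a, ha, rfl⟩, _, ⟨b, hb, rfl⟩, hdiam⟩ :=
    (isCompact_Icc.image_of_continuousOn hγ).exists_dist_eq_diam
      ((nonempty_Icc.2 hL.le).image γ)
  by_contra! hV
  rw [← hdiam, ← edist_dist] at hV
  have hseg : ∀ t ∈ Icc 0 L, γ t ∈ affineSegment ℝ (γ a) (γ b) := fun t ht =>
    dist_add_dist_eq_iff.1 (dist_add_dist_eq_of_eVariationOn_le_two_mul_edist hclosed ha hb hV ht)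
  have hcont : ContinuousOn (fun t => dist (γ a) (γ t)) (Icc 0 L) :=
    (continuous_const.dist continuous_id).comp_continuousOn hγ
  refine hcont.not_injOn_Ico_of_apply_eq hL (congrArg (dist (γ a)) hclosed)
    fun s hs t ht hst => hinj hs ht ?_
  exact injOn_dist_affineSegment _ _ (hseg s (Ico_subset_Icc_self hs))
    (hseg t (Ico_subset_Icc_self ht)) hst

theorem length_gt_two_diam_of_simple
    (L : ℝ) (hL : 0 < L) (γ : ℝ → EuclideanSpace ℝ (Fin 3))
    (hγ : ContinuousOn γ (Set.Icc 0 L)) (hclosed : γ 0 = γ L)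
    (hinj : Set.InjOn γ (Set.Ico 0 L))
    (hfin : eVariationOn γ (Set.Icc 0 L) ≠ ⊤) :
    2 * ENNReal.ofReal (Metric.diam (γ '' Set.Icc 0 L)) <
      eVariationOn γ (Set.Icc 0 L) :=
  length_gt_two_diam_of_simple_general L hL γ hγ hclosed hinj
end

section
/- Let L > 0 and let C_L : ℝ → ℝ³ be the round circle of length L, C_L(s) = (L/(2π)) · (cos(2πs/L), sin(2πs/L), 0). Then for every p ∈ (-1, ∞) with p ≠ 0, (1/L²) ∫₀^L ∫₀^L ‖C_L(s) − C_L(t)‖^p ds dt = (L/π)^p · (1/π) ∫₀^π (sin θ)^p dθ. -/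
open MeasureTheory Real

/-- The round circle of length `L` in `ℝ³`, parametrized by arc length. -/
noncomputable def circleCurve (L : ℝ) (s : ℝ) : EuclideanSpace ℝ (Fin 3) :=
  (EuclideanSpace.equiv (Fin 3) ℝ).symm
    ![L / (2 * Real.pi) * Real.cos (2 * Real.pi * s / L),
      L / (2 * Real.pi) * Real.sin (2 * Real.pi * s / L), 0]

/-! The chord between parameters `s` and `t` has length `(L / π) |sin (π (s - t) / L)|`, a function
of `s - t` alone that is `L`-periodic. Hence, by periodicity, the inner integral does not depend
on `s`, and the substitution `θ = π u / L` turns it into `(L / π)^(p + 1) ∫₀^π sin^p θ dθ`. -/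

theorem Real.cos_sub_cos_sq_add_sin_sub_sin_sq (a b : ℝ) :
    (cos a - cos b) ^ 2 + (sin a - sin b) ^ 2 = (2 * sin ((a - b) / 2)) ^ 2 := by
  rw [cos_sub_cos, sin_sub_sin]
  linear_combination (4 * sin ((a - b) / 2) ^ 2) * sin_sq_add_cos_sq ((a + b) / 2)

theorem norm_circleCurve_sub {L : ℝ} (hL : 0 < L) (s t : ℝ) :
    ‖circleCurve L s - circleCurve L t‖ = L / π * |sin (π * (s - t) / L)| := by
  set r := L / (2 * π)
  have hsq : ‖circleCurve L s - circleCurve L t‖ ^ 2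
      = (2 * r * sin (π * (s - t) / L)) ^ 2 := by
    rw [EuclideanSpace.norm_sq_eq]
    have hhalf : (2 * π * s / L - 2 * π * t / L) / 2 = π * (s - t) / L := by ring
    have key := cos_sub_cos_sq_add_sin_sub_sin_sq (2 * π * s / L) (2 * π * t / L)
    rw [hhalf] at key
    simp only [circleCurve, PiLp.continuousLinearEquiv_symm_apply, PiLp.sub_apply, norm_eq_abs,
      sq_abs, Fin.sum_univ_three, Matrix.cons_val_zero, Matrix.cons_val_one, Matrix.cons_val,
      sub_self, zero_pow two_ne_zero, add_zero]
    linear_combination r ^ 2 * key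
  have hr : 2 * r = L / π := by simp only [r]; field_simp
  rw [← sqrt_sq (norm_nonneg _), hsq, sqrt_sq_eq_abs, abs_mul,
    abs_of_pos (by positivity : 0 < 2 * r), hr]

theorem Function.Periodic.intervalIntegral_intervalIntegral_comp_sub {E : Type*}
    [NormedAddCommGroup E] [NormedSpace ℝ E] [CompleteSpace E] {f : ℝ → E} {T : ℝ}
    (hf : Function.Periodic f T) :
    ∫ s in (0:ℝ)..T, ∫ t in (0:ℝ)..T, f (s - t) = T • ∫ t in (0:ℝ)..T, f t := by
  have hinner (s : ℝ) : ∫ t in (0:ℝ)..T, f (s - t) = ∫ t in (0:ℝ)..T, f t := by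
    rw [intervalIntegral.integral_comp_sub_left, sub_zero]
    simpa only [sub_add_cancel, zero_add] using hf.intervalIntegral_add_eq (s - T) 0
  simp only [hinner]
  rw [intervalIntegral.integral_const, sub_zero]

theorem intervalIntegral_abs_sin_rpow_mul_div {L : ℝ} (hL : 0 < L) (p : ℝ) :
    ∫ u in (0:ℝ)..L, |sin (π * u / L)| ^ p = L / π * ∫ θ in (0:ℝ)..π, sin θ ^ p := by
  have hc : L / π ≠ 0 := by positivity
  have hsin : ∫ θ in (0:ℝ)..π, |sin θ| ^ p = ∫ θ in (0:ℝ)..π, sin θ ^ p := by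
    refine intervalIntegral.integral_congr fun θ hθ => ?_
    rw [Set.uIcc_of_le pi_pos.le] at hθ
    simp only [abs_of_nonneg (sin_nonneg_of_nonneg_of_le_pi hθ.1 hθ.2)]
  have hdiv (u : ℝ) : π * u / L = u / (L / π) := by field_simp
  simp only [hdiv]
  rw [intervalIntegral.integral_comp_div (fun θ => |sin θ| ^ p) hc, zero_div,
    div_div_cancel₀ hL.ne', hsin, smul_eq_mul]

theorem circle_mean_chord_value_general
    (L : ℝ) (hL : 0 < L) (p : ℝ) :
    (1 / L ^ 2) *
        ∫ s in (0:ℝ)..L, ∫ t in (0:ℝ)..L, ‖circleCurve L s - circleCurve L t‖ ^ p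
      = (L / Real.pi) ^ p *
          ((1 / Real.pi) * ∫ θ in (0:ℝ)..Real.pi, Real.sin θ ^ p) := by
  set F : ℝ → ℝ := fun u => (L / π) ^ p * |sin (π * u / L)| ^ p
  have hchord (s t : ℝ) : ‖circleCurve L s - circleCurve L t‖ ^ p = F (s - t) := by
    rw [norm_circleCurve_sub hL, mul_rpow (by positivity) (abs_nonneg _)]
  have hF : Function.Periodic F L := fun u => by
    have : π * (u + L) / L = π * u / L + π := by field_simp
    simp only [F, this, sin_add_pi, abs_neg]
  simp only [hchord]
  rw [hF.intervalIntegral_intervalIntegral_comp_sub, intervalIntegral.integral_const_mul,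
    intervalIntegral_abs_sin_rpow_mul_div hL, smul_eq_mul]
  field_simp

theorem circle_mean_chord_value
    (L : ℝ) (hL : 0 < L) (p : ℝ) (hp : -1 < p) (hp0 : p ≠ 0) :
    (1 / L ^ 2) *
        ∫ s in (0:ℝ)..L, ∫ t in (0:ℝ)..L, ‖circleCurve L s - circleCurve L t‖ ^ p
      = (L / Real.pi) ^ p *
          ((1 / Real.pi) * ∫ θ in (0:ℝ)..Real.pi, Real.sin θ ^ p) :=
  circle_mean_chord_value_general L hL p
end

section
/- Let L > 0 and let C_L : ℝ → ℝ³ be the round circle of length L, C_L(s) = (L/(2π)) · (cos(2πs/L), sin(2πs/L), 0). Then (1/L²) ∫₀^L ∫₀^L log ‖C_L(s) − C_L(t)‖ ds dt = log(L/(2π)). -/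
open MeasureTheory Real

/-!
Identify the plane of the circle with `ℂ`, so that `C_L(s) = circleMap 0 R (2πs/L)` with
`R = L/(2π)`. For fixed `s`, the inner integral is then `L` times the circle average of
`log ‖z - a‖` over the circle of radius `R`, where `a = C_L(s)` lies on that circle; this average
equals `log R` for every `a` in the closed disc (for `a` on the circle this is the identity
`∫₀^π log sin = -π log 2`). The outer integral then contributes a factor `L`.
-/

noncomputable def complexToXYPlane : ℂ →ₗᵢ[ℝ] EuclideanSpace ℝ (Fin 3) where
  toFun z := !₂[z.re, z.im, 0]
  map_add' z w := by ext i; fin_cases i <;> simp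
  map_smul' c z := by ext i; fin_cases i <;> simp
  norm_map' z := by
    simp [EuclideanSpace.norm_eq, Fin.sum_univ_three, Complex.norm_eq_sqrt_sq_add_sq]

theorem circleCurve_eq_complexToXYPlane (L s : ℝ) :
    circleCurve L s = complexToXYPlane (circleMap 0 (L / (2 * π)) (2 * π * s / L)) := by
  ext i
  fin_cases i <;>
    simp [circleCurve, complexToXYPlane, circleMap_zero_re, circleMap_zero_im]

theorem integral_comp_circleMap_eq_mul_circleAverage {E : Type*} [NormedAddCommGroup E]
    [NormedSpace ℝ E] (f : ℂ → E) (c : ℂ) (R T : ℝ) :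
    ∫ t in (0:ℝ)..T, f (circleMap c R (2 * π * t / T)) = T • circleAverage f c R := by
  rcases eq_or_ne T 0 with rfl | hT
  · simp
  simp only [mul_div_right_comm (2 * π) _ T]
  rw [intervalIntegral.integral_comp_mul_left (fun θ => f (circleMap c R θ)) (by positivity),
    mul_zero, div_mul_cancel₀ _ hT, circleAverage_def, smul_smul, inv_div]
  congr 1

theorem circle_log_mean_chord_value (L : ℝ) (hL : 0 < L) :
    (1 / L ^ 2) *
        ∫ s in (0:ℝ)..L, ∫ t in (0:ℝ)..L, Real.log ‖circleCurve L s - circleCurve L t‖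
      = Real.log (L / (2 * Real.pi)) := by
  have inner (s : ℝ) :
      ∫ t in (0:ℝ)..L, log ‖circleCurve L s - circleCurve L t‖ = L * log (L / (2 * π)) := by
    simp only [circleCurve_eq_complexToXYPlane, ← map_sub, LinearIsometry.norm_map]
    set a := circleMap 0 (L / (2 * π)) (2 * π * s / L)
    have ha : a ∈ Metric.closedBall 0 |L / (2 * π)| :=
      Metric.sphere_subset_closedBall (circleMap_mem_sphere' 0 _ _)
    simp only [norm_sub_rev a]
    rw [integral_comp_circleMap_eq_mul_circleAverage (fun z => log ‖z - a‖),
      circleAverage_log_norm_sub_const_of_mem_closedBall ha, smul_eq_mul]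
  rw [intervalIntegral.integral_congr fun s _ => inner s, intervalIntegral.integral_const,
    smul_eq_mul, sub_zero]
  field_simp
end

section
/- Let L > 0 and let γ : ℝ → ℝ³ be continuously differentiable and L-periodic (γ(s + L) = γ(s) for all s) with ‖γ'(s)‖ = 1 for all s. Let c := (1/L) ∫₀^L γ(s) ds. Then ∫₀^L ‖γ(s) − c‖² ds ≤ L³/(4π²); equivalently, the radius of gyration satisfies R_g(γ) ≤ L/(2π). -/
/-!
Wirtinger's inequality: if `f` has mean zero on `[a, b]` and `f a = f b`, integration by parts
gives `‖f̂ n‖ = (b - a) / (2π|n|) ‖f̂' n‖` for `n ≠ 0`, while `f̂ 0 = 0`; Parseval then yields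
`∫ ‖f‖² ≤ ((b - a) / 2π)² ∫ ‖f'‖²`. Applied coordinatewise to `γ - c` over one period, where
`∫ ‖γ'‖² = L`, this gives the bound.
-/

open MeasureTheory Real Set

theorem ContinuousOn.memLp_restrict_Ioc {E : Type*} [NormedAddCommGroup E] {f : ℝ → E}
    {a b : ℝ} (hf : ContinuousOn f (Icc a b)) (p : ENNReal) :
    MemLp f p (volume.restrict (Ioc a b)) := by
  obtain ⟨C, hC⟩ := isCompact_Icc.exists_bound_of_continuousOn hf
  refine MemLp.of_bound ((hf.mono Ioc_subset_Icc_self).aestronglyMeasurable measurableSet_Ioc) C ?_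
  exact (ae_restrict_iff' measurableSet_Ioc).2
    (ae_of_all _ fun x hx => hC x (Ioc_subset_Icc_self hx))

theorem fourierCoeffOn_zero {E : Type*} [NormedAddCommGroup E] [NormedSpace ℂ E]
    {a b : ℝ} (hab : a < b) (f : ℝ → E) :
    fourierCoeffOn hab f 0 = (b - a)⁻¹ • ∫ x in a..b, f x := by
  simp [fourierCoeffOn_eq_integral]

theorem norm_fourierCoeffOn_le_of_hasDerivAt {a b : ℝ} (hab : a < b) {f f' : ℝ → ℂ}
    (hf : ∀ x ∈ Icc a b, HasDerivAt f (f' x) x) (hf' : IntervalIntegrable f' volume a b)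
    (hfab : f a = f b) {n : ℤ} (hn : n ≠ 0) :
    ‖fourierCoeffOn hab f n‖ ≤ (b - a) / (2 * π) * ‖fourierCoeffOn hab f' n‖ := by
  have hcoeff := fourierCoeffOn_of_hasDerivAt hab hn (by rwa [uIcc_of_le hab.le]) hf'
  rw [hfab, sub_self, mul_zero, zero_sub] at hcoeff
  have hn1 : (1 : ℝ) ≤ |(n : ℝ)| := by exact_mod_cast Int.one_le_abs hn
  rw [hcoeff, norm_mul, norm_neg, norm_mul]
  have hnorm : ‖-2 * (π : ℂ) * Complex.I * n‖ = 2 * π * |(n : ℝ)| := by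
    simp [abs_of_pos pi_pos]
  have hlen : ‖(b : ℂ) - a‖ = b - a := by
    rw [← Complex.ofReal_sub, Complex.norm_real, norm_of_nonneg (sub_pos.2 hab).le]
  rw [norm_div, norm_one, hnorm, hlen]
  calc 1 / (2 * π * |(n : ℝ)|) * ((b - a) * ‖fourierCoeffOn hab f' n‖)
      = (b - a) / (2 * π * |(n : ℝ)|) * ‖fourierCoeffOn hab f' n‖ := by ring
    _ ≤ (b - a) / (2 * π) * ‖fourierCoeffOn hab f' n‖ := by
      gcongr ?_ * _
      exact div_le_div_of_nonneg_left (sub_pos.2 hab).le (by positivity)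
        (le_mul_of_one_le_right (by positivity) hn1)

theorem wirtinger_inequality {a b : ℝ} (hab : a < b) {f f' : ℝ → ℂ}
    (hf : ∀ x ∈ Icc a b, HasDerivAt f (f' x) x) (hf' : MemLp f' 2 (volume.restrict (Ioc a b)))
    (hfab : f a = f b) (hmean : ∫ x in a..b, f x = 0) :
    ∫ x in a..b, ‖f x‖ ^ 2 ≤ ((b - a) / (2 * π)) ^ 2 * ∫ x in a..b, ‖f' x‖ ^ 2 := by
  have hfc : ContinuousOn f (Icc a b) := fun x hx => (hf x hx).continuousAt.continuousWithinAt
  have hf'_int : IntervalIntegrable f' volume a b :=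
    (intervalIntegrable_iff_integrableOn_Ioc_of_le hab.le).2 (hf'.integrable one_le_two)
  have hcoeff : ∀ n, ‖fourierCoeffOn hab f n‖ ^ 2 ≤
      ((b - a) / (2 * π)) ^ 2 * ‖fourierCoeffOn hab f' n‖ ^ 2 := by
    intro n
    rcases eq_or_ne n 0 with rfl | hn
    · rw [fourierCoeffOn_zero, hmean, smul_zero, norm_zero, zero_pow two_ne_zero]
      positivity
    · rw [← mul_pow]
      exact pow_le_pow_left₀ (norm_nonneg _)
        (norm_fourierCoeffOn_le_of_hasDerivAt hab hf hf'_int hfab hn) 2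
  have hparseval := hasSum_le hcoeff (hasSum_sq_fourierCoeffOn hab (hfc.memLp_restrict_Ioc 2))
    ((hasSum_sq_fourierCoeffOn hab hf').mul_left _)
  rwa [smul_eq_mul, smul_eq_mul, mul_left_comm, mul_le_mul_iff_right₀ (inv_pos.2 (sub_pos.2 hab))]
    at hparseval

theorem EuclideanSpace.wirtinger_inequality {ι : Type*} [Fintype ι] {a b : ℝ} (hab : a < b)
    {f f' : ℝ → EuclideanSpace ℝ ι}
    (hf : ∀ x ∈ Icc a b, HasDerivAt f (f' x) x) (hf' : MemLp f' 2 (volume.restrict (Ioc a b)))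
    (hfab : f a = f b) (hmean : ∫ x in a..b, f x = 0) :
    ∫ x in a..b, ‖f x‖ ^ 2 ≤ ((b - a) / (2 * π)) ^ 2 * ∫ x in a..b, ‖f' x‖ ^ 2 := by
  have hfc : ContinuousOn f (Icc a b) := fun x hx => (hf x hx).continuousAt.continuousWithinAt
  have hcoord : ∀ i, ∫ x in a..b, ‖f x i‖ ^ 2 ≤
      ((b - a) / (2 * π)) ^ 2 * ∫ x in a..b, ‖f' x i‖ ^ 2 := by
    intro i
    let p : EuclideanSpace ℝ ι →L[ℝ] ℂ := Complex.ofRealCLM.comp (EuclideanSpace.proj i)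
    have hwirt := _root_.wirtinger_inequality hab (f := fun x => p (f x)) (f' := fun x => p (f' x))
      (fun x hx => p.hasFDerivAt.comp_hasDerivAt x (hf x hx)) (p.comp_memLp' hf')
      (by rw [hfab])
      (by rw [p.intervalIntegral_comp_comm (hfc.intervalIntegrable_of_Icc hab.le), hmean, map_zero])
    simpa [p, Complex.norm_real] using hwirt
  have hf_int : ∀ i, IntervalIntegrable (fun x => ‖f x i‖ ^ 2) volume a b := fun i =>
    (((EuclideanSpace.proj i).continuous.comp_continuousOn hfc).norm.pow 2).intervalIntegrable_of_Icc
      hab.le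
  have hf'_int : ∀ i, IntervalIntegrable (fun x => ‖f' x i‖ ^ 2) volume a b := fun i =>
    (intervalIntegrable_iff_integrableOn_Ioc_of_le hab.le).2
      ((EuclideanSpace.proj (𝕜 := ℝ) i).comp_memLp' hf').integrable_norm_pow'
  simp_rw [EuclideanSpace.norm_sq_eq]
  rw [intervalIntegral.integral_finsetSum fun i _ => hf_int i,
    intervalIntegral.integral_finsetSum fun i _ => hf'_int i, Finset.mul_sum]
  exact Finset.sum_le_sum fun i _ => hcoord i

theorem gyration_radius_bound
    (L : ℝ) (hL : 0 < L) (γ : ℝ → EuclideanSpace ℝ (Fin 3))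
    (hC1 : ContDiff ℝ 1 γ)
    (hper : ∀ s, γ (s + L) = γ s)
    (hunit : ∀ s, ‖deriv γ s‖ = 1) :
    ∫ s in (0:ℝ)..L, ‖γ s - (1 / L) • (∫ u in (0:ℝ)..L, γ u)‖ ^ 2
      ≤ L ^ 3 / (4 * Real.pi ^ 2) := by
  set c := (1 / L) • ∫ u in (0:ℝ)..L, γ u
  have hderiv : ∀ s, HasDerivAt (fun s => γ s - c) (deriv γ s) s := fun s =>
    ((hC1.differentiable one_ne_zero s).hasDerivAt).sub_const c
  have hmean : ∫ s in (0:ℝ)..L, (γ s - c) = 0 := by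
    rw [intervalIntegral.integral_sub (hC1.continuous.intervalIntegrable 0 L)
      intervalIntegrable_const, intervalIntegral.integral_const, sub_zero, smul_smul,
      mul_one_div_cancel hL.ne', one_smul, sub_self]
  have hwirt := EuclideanSpace.wirtinger_inequality hL (fun s _ => hderiv s)
    ((hC1.continuous_deriv le_rfl).continuousOn.memLp_restrict_Ioc 2)
    (by rw [← hper 0, zero_add]) hmean
  simp only [hunit, one_pow, intervalIntegral.integral_const, sub_zero, smul_eq_mul, mul_one]
    at hwirt
  calc _ ≤ (L / (2 * π)) ^ 2 * L := hwirt
    _ = L ^ 3 / (4 * π ^ 2) := by ring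
end

section
/- Let (Ω, μ) be a probability measure space and let f : Ω → ℝ be measurable with 0 < f(ω) ≤ M for μ-almost every ω, for some constant M, and suppose that ∫ f^{−p₀} dμ < ∞ for some p₀ ∈ (0, 1). Then the limit as p → 0 (through nonzero values) of (∫ f^p dμ)^{1/p} exists and equals exp(∫ log f dμ); in particular log f is μ-integrable. -/
/-!
Differentiating under the integral sign, `I p = ∫ f ^ p dμ` is differentiable at `0` with
`I 0 = 1` and `I' 0 = ∫ log f dμ`; the domination near `p = 0` is
`|f ^ p log f| ≲ 1 + f ^ (-p₀)`, since `f` is bounded above and `-log x ≤ x ^ (-q) / q`.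
Then `log (I p) / p`, the slope of `log ∘ I` at `0`, tends to `∫ log f dμ`, and
`I p ^ (1 / p) = exp (log (I p) / p)`.
-/

open MeasureTheory Filter Topology

namespace Real

lemma neg_log_le_rpow_neg_div {x q : ℝ} (hx : 0 < x) (hq : 0 < q) :
    -log x ≤ x ^ (-q) / q := by
  simpa [log_inv, rpow_neg hx.le, inv_rpow hx.le] using log_le_rpow_div (inv_nonneg.2 hx.le) hq

lemma abs_rpow_mul_log_le {x M q p : ℝ} (hx : 0 < x) (hxM : x ≤ M) (hq : 0 < q)
    (hp : |p| ≤ q) :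
    |x ^ p * log x| ≤ M ^ q * |log M| + x ^ (-(2 * q)) / q := by
  obtain ⟨hpq, hqp⟩ := abs_le.1 hp
  rcases le_or_gt 1 x with hx1 | hx1
  · have hlog : 0 ≤ log x := log_nonneg hx1
    calc |x ^ p * log x| = x ^ p * log x := abs_of_nonneg (mul_nonneg (by positivity) hlog)
      _ ≤ x ^ q * log x := mul_le_mul_of_nonneg_right (rpow_le_rpow_of_exponent_le hx1 hqp) hlog
      _ ≤ M ^ q * |log M| :=
        mul_le_mul (rpow_le_rpow hx.le hxM hq.le) ((log_le_log hx hxM).trans (le_abs_self _))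
          hlog (rpow_nonneg (hx.le.trans hxM) q)
      _ ≤ _ := le_add_of_nonneg_right (by positivity)
  · have hlog : 0 ≤ -log x := neg_nonneg.2 (log_nonpos hx.le hx1.le)
    calc |x ^ p * log x| = x ^ p * -log x := by
          rw [abs_mul, abs_of_pos (rpow_pos_of_pos hx p), abs_of_nonpos (neg_nonneg.1 hlog)]
      _ ≤ x ^ (-q) * (x ^ (-q) / q) :=
        mul_le_mul (rpow_le_rpow_of_exponent_ge hx hx1.le hpq) (neg_log_le_rpow_neg_div hx hq)
          hlog (by positivity)
      _ = x ^ (-(2 * q)) / q := by rw [← mul_div_assoc, ← rpow_add hx]; ring_nf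
      _ ≤ _ := le_add_of_nonneg_left (by have := hx.trans_le hxM; positivity)

end Real

open Real

theorem hasDerivAt_integral_rpow_zero {Ω : Type*} [MeasurableSpace Ω] {μ : Measure Ω}
    [IsFiniteMeasure μ] {f : Ω → ℝ} (hf : AEMeasurable f μ) {M p₀ : ℝ}
    (hbdd : ∀ᵐ ω ∂μ, 0 < f ω ∧ f ω ≤ M) (hp₀ : 0 < p₀)
    (hint : Integrable (fun ω => f ω ^ (-p₀)) μ) :
    Integrable (fun ω => log (f ω)) μ ∧
      HasDerivAt (fun p : ℝ => ∫ ω, f ω ^ p ∂μ) (∫ ω, log (f ω) ∂μ) 0 := by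
  have hq : 0 < p₀ / 2 := half_pos hp₀
  have hbound : Integrable
      (fun ω => M ^ (p₀ / 2) * |log M| + f ω ^ (-(2 * (p₀ / 2))) / (p₀ / 2)) μ := by
    rw [mul_div_cancel₀ p₀ two_ne_zero]
    exact (integrable_const _).add (hint.div_const _)
  have := hasDerivAt_integral_of_dominated_loc_of_deriv_le (μ := μ) (x₀ := 0)
    (F := fun p ω => f ω ^ p) (F' := fun p ω => f ω ^ p * log (f ω))
    (Metric.ball_mem_nhds 0 hq)
    (Eventually.of_forall fun p => (hf.pow_const p).aestronglyMeasurable)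
    (by simp) ((hf.pow_const 0).mul (measurable_log.comp_aemeasurable hf)).aestronglyMeasurable
    (hbdd.mono fun ω hω p hp =>
      abs_rpow_mul_log_le hω.1 hω.2 hq (by simpa using (Metric.mem_ball.1 hp).le))
    hbound
    (hbdd.mono fun ω hω p _ => by simpa using (hasStrictDerivAt_const_rpow hω.1 p).hasDerivAt)
  simpa only [rpow_zero, one_mul] using this

theorem HasDerivAt.tendsto_rpow_one_div {I : ℝ → ℝ} {L : ℝ} (hI : HasDerivAt I L 0)
    (hI0 : I 0 = 1) : Tendsto (fun p => I p ^ (1 / p)) (𝓝[≠] 0) (𝓝 (Real.exp L)) := by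
  have hlog : HasDerivAt (fun p => Real.log (I p)) L 0 := by
    simpa [hI0] using hI.log (by simp [hI0])
  have hslope : Tendsto (fun p => Real.log (I p) / p) (𝓝[≠] 0) (𝓝 L) := by
    simpa [slope_fun_def_field, hI0] using hasDerivAt_iff_tendsto_slope.1 hlog
  have hpos : ∀ᶠ p in 𝓝[≠] 0, 0 < I p :=
    eventually_nhdsWithin_of_eventually_nhds <|
      hI.continuousAt.eventually (eventually_gt_nhds (by rw [hI0]; exact one_pos))
  refine ((Real.continuous_exp.tendsto L).comp hslope).congr' ?_
  filter_upwards [hpos] with p hp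
  simp only [Function.comp_apply, Real.rpow_def_of_pos hp, mul_one_div]

theorem p_mean_tendsto_geometric_mean
    {Ω : Type*} [MeasurableSpace Ω] (μ : Measure Ω) [IsProbabilityMeasure μ]
    (f : Ω → ℝ) (hf : Measurable f) (M : ℝ)
    (hbdd : ∀ᵐ ω ∂μ, 0 < f ω ∧ f ω ≤ M)
    (p₀ : ℝ) (hp₀ : p₀ ∈ Set.Ioo (0:ℝ) 1)
    (hint : Integrable (fun ω => f ω ^ (-p₀)) μ) :
    Integrable (fun ω => Real.log (f ω)) μ ∧
      Tendsto (fun p : ℝ => (∫ ω, f ω ^ p ∂μ) ^ (1 / p)) (𝓝[≠] 0)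
        (𝓝 (Real.exp (∫ ω, Real.log (f ω) ∂μ))) := by
  obtain ⟨hlog, hderiv⟩ := hasDerivAt_integral_rpow_zero hf.aemeasurable hbdd hp₀.1 hint
  exact ⟨hlog, hderiv.tendsto_rpow_one_div (by simp)⟩
end

section
/- Let L > 0 and let γ : ℝ → ℝ³ be continuously differentiable and L-periodic with ‖γ'(s)‖ = 1 for all s, and injective on [0, L). Then the function (s, t) ↦ log ‖γ(s) − γ(t)‖ is Lebesgue-integrable on [0, L] × [0, L]; in particular ∫₀^L ∫₀^L |log ‖γ(s) − γ(t)‖| ds dt < ∞. -/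
/-!
Write `d(s, t) = min |s - t| (L - |s - t|)` for the distance on the parameter circle. A unit-speed
embedded closed curve satisfies `c * d(s, t) ≤ ‖γ s - γ t‖ ≤ d(s, t)`: the upper bound is the
Lipschitz property; the lower one holds near the diagonal since `γ'` is uniformly continuous of unit
length, so that `γ s - γ t ≈ (s - t) • γ' t`, and away from it by injectivity and compactness.
Hence `|log ‖γ s - γ t‖| ≤ |log c| + |log d(s, t)|`, and `log d` is integrable over the square
because its singularities `log |s - t - a|`, `a ∈ {-L, 0, L}`, are pullbacks of the locally
integrable `log` along the measure-preserving shear `(s, t) ↦ (s - t, t)`.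
-/

open MeasureTheory Real Set Function

section

variable {G E : Type*} [AddGroup G] [MeasurableSpace G] [MeasurableAdd₂ G] [MeasurableNeg G]
  {μ ν : Measure G} [SFinite μ] [SFinite ν] [μ.IsAddRightInvariant] [NormedAddCommGroup E]

theorem MeasureTheory.IntegrableOn.comp_sub_prod {f : G → E} {s t : Set G}
    (hf : IntegrableOn f s μ) (hs : MeasurableSet s) (ht : MeasurableSet t) (hνt : ν t ≠ ⊤) :
    IntegrableOn (fun q : G × G => f (q.1 - q.2)) {q | q.1 - q.2 ∈ s ∧ q.2 ∈ t} (μ.prod ν) := by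
  have : Fact (ν t < ⊤) := ⟨hνt.lt_top⟩
  have hprod : Integrable ((s ×ˢ t).indicator fun q : G × G => f q.1) (μ.prod ν) := by
    rw [integrable_indicator_iff (hs.prod ht), IntegrableOn, ← Measure.prod_restrict]
    exact hf.comp_fst _
  have hmeas : MeasurableSet {q : G × G | q.1 - q.2 ∈ s ∧ q.2 ∈ t} :=
    (measurable_fst.sub measurable_snd).prodMk measurable_snd (hs.prod ht)
  rw [← integrable_indicator_iff hmeas]
  exact (measurePreserving_sub_prod μ ν).integrable_comp_of_integrable hprod

end

theorem integrableOn_log_sub_sub_prod (c a₁ b₁ a₂ b₂ : ℝ) :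
    IntegrableOn (fun q : ℝ × ℝ => log (q.1 - q.2 - c)) (Icc a₁ b₁ ×ˢ Icc a₂ b₂) := by
  have hlog := (intervalIntegral.intervalIntegrable_log'
    (a := a₁ - b₂ - c) (b := b₁ - a₂ - c)).comp_sub_right c
  rw [sub_add_cancel, sub_add_cancel, intervalIntegrable_iff'] at hlog
  rw [Measure.volume_eq_prod]
  refine ((hlog.mono_set Icc_subset_uIcc).comp_sub_prod measurableSet_Icc
    (measurableSet_Icc (a := a₂) (b := b₂)) (by simp)).mono_set ?_
  rintro ⟨s, t⟩ ⟨⟨hs₁, hs₂⟩, ht₁, ht₂⟩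
  exact ⟨⟨by linarith, by linarith⟩, ht₁, ht₂⟩

theorem abs_log_le_of_mul_le_of_le {c d x : ℝ} (hc : 0 < c) (hx : 0 < x) (hcd : c * d ≤ x)
    (hxd : x ≤ d) : |log x| ≤ |log c| + |log d| := by
  have hd : 0 < d := hx.trans_le hxd
  have hlow : log c + log d ≤ log x := by
    rw [← log_mul hc.ne' hd.ne']
    exact log_le_log (by positivity) hcd
  calc |log x| ≤ max |log c + log d| |log d| := abs_le_max_abs_abs hlow (log_le_log hx hxd)
    _ ≤ |log c| + |log d| := max_le (abs_add_le _ _) (le_add_of_nonneg_left (abs_nonneg _))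

theorem exists_pos_abs_sub_div_two_le_norm_sub {E : Type*} [NormedAddCommGroup E]
    [NormedSpace ℝ E] {γ : ℝ → E} (hγ : ContDiff ℝ 1 γ)
    (hunit : ∀ s, ‖deriv γ s‖ = 1) (a b : ℝ) :
    ∃ δ > 0, ∀ s ∈ Icc a b, ∀ t ∈ Icc a b, |s - t| ≤ δ → |s - t| / 2 ≤ ‖γ s - γ t‖ := by
  obtain ⟨δ, hδ, hclose⟩ := Metric.uniformContinuousOn_iff.mp
    (isCompact_Icc.uniformContinuousOn_of_continuous
      (s := Icc a b) (hγ.continuous_deriv le_rfl).continuousOn) (1 / 2) one_half_pos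
  refine ⟨δ / 2, half_pos hδ, fun s hs t ht hst => ?_⟩
  set v := deriv γ t
  -- the mean value inequality for `u ↦ γ u - u • v`, whose derivative `γ' u - γ' t` is small
  have hmvt : ‖(γ s - s • v) - (γ t - t • v)‖ ≤ 1 / 2 * ‖s - t‖ := by
    refine convex_uIcc t s |>.norm_image_sub_le_of_norm_hasDerivWithin_le
      (f := fun u => γ u - u • v) (f' := fun u => deriv γ u - v) (fun u _ => ?_) (fun u hu => ?_)
      left_mem_uIcc right_mem_uIcc
    · exact (((hγ.differentiable one_ne_zero) u).hasDerivAt.sub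
        ((hasDerivAt_id u).smul_const v) |>.congr_deriv (by simp)).hasDerivWithinAt
    · rw [← dist_eq_norm]
      refine (hclose u (uIcc_subset_Icc ht hs hu) t ht ?_).le
      rw [Real.dist_eq]
      linarith [abs_sub_left_of_mem_uIcc hu]
  have hsplit : (s - t) • v = (γ s - γ t) - ((γ s - s • v) - (γ t - t • v)) := by
    rw [sub_smul]; abel
  have htri := norm_sub_le (γ s - γ t) ((γ s - s • v) - (γ t - t • v))
  rw [← hsplit, norm_smul, hunit, mul_one, Real.norm_eq_abs] at htri
  rw [Real.norm_eq_abs] at hmvt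
  linarith

/-- For `|s - t| ≤ L` this is the distance `min_k |s - t + k L|` of `s` and `t` on `ℝ / L ℤ`. -/
def circDist (L s t : ℝ) : ℝ := min |s - t| (L - |s - t|)

theorem continuous_circDist (L : ℝ) : Continuous fun q : ℝ × ℝ => circDist L q.1 q.2 := by
  unfold circDist; fun_prop

theorem circDist_le (L s t : ℝ) : circDist L s t ≤ L :=
  (min_le_right _ _).trans (sub_le_self _ (abs_nonneg _))

theorem abs_log_circDist_le {L s t : ℝ} (hs : s ∈ Icc 0 L) (ht : t ∈ Icc 0 L) :
    |log (circDist L s t)| ≤ |log (s - t)| + |log (s - t - L)| + |log (s - t + L)| := by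
  have hfar : |log (L - |s - t|)| ≤ |log (s - t - L)| + |log (s - t + L)| := by
    rcases le_total 0 (s - t) with h | h
    · have hL : L - |s - t| = |s - t - L| := by
        rw [abs_of_nonneg h, abs_of_nonpos (by linarith [hs.2, ht.1])]; ring
      rw [hL, log_abs]
      exact le_add_of_nonneg_right (abs_nonneg _)
    · have hL : L - |s - t| = |s - t + L| := by
        rw [abs_of_nonpos h, abs_of_nonneg (by linarith [hs.1, ht.2])]; ring
      rw [hL, log_abs]
      exact le_add_of_nonneg_left (abs_nonneg _)
  rcases min_choice |s - t| (L - |s - t|) with h | h <;> rw [circDist, h]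
  · rw [log_abs]; linarith [abs_nonneg (log (s - t - L)), abs_nonneg (log (s - t + L))]
  · linarith [abs_nonneg (log (s - t))]

theorem integrableOn_log_circDist (L : ℝ) :
    IntegrableOn (fun q : ℝ × ℝ => log (circDist L q.1 q.2)) (Icc 0 L ×ˢ Icc 0 L) := by
  have hsing (a : ℝ) := (integrableOn_log_sub_sub_prod a 0 L 0 L).norm
  have hdiag := hsing 0
  have hcorner := hsing (-L)
  simp only [sub_zero, sub_neg_eq_add] at hdiag hcorner
  refine ((hdiag.add (hsing L)).add hcorner).mono'
    (continuous_circDist L).measurable.log.aestronglyMeasurable ?_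
  filter_upwards [ae_restrict_mem (measurableSet_Icc.prod measurableSet_Icc)] with q ⟨hs, ht⟩
  exact abs_log_circDist_le hs ht

section ClosedCurve

variable {α : Type*} {γ : ℝ → α} {L s t : ℝ}

theorem Function.Periodic.exists_lift_circDist (hper : Periodic γ L) (hs : s ∈ Icc 0 L)
    (ht : t ∈ Icc 0 L) : ∃ s' ∈ Icc 0 (2 * L), ∃ t' ∈ Icc 0 (2 * L),
      γ s' = γ s ∧ γ t' = γ t ∧ |s' - t'| = circDist L s t := by
  obtain ⟨hs₀, hsL⟩ := hs
  obtain ⟨ht₀, htL⟩ := ht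
  rcases le_total |s - t| (L - |s - t|) with h | h
  · exact ⟨s, ⟨hs₀, by linarith⟩, t, ⟨ht₀, by linarith⟩, rfl, rfl, (min_eq_left h).symm⟩
  rcases le_total t s with hts | hst
  · refine ⟨s, ⟨hs₀, by linarith⟩, t + L, ⟨by linarith, by linarith⟩, rfl, hper t, ?_⟩
    rw [circDist, min_eq_right h, abs_of_nonneg (sub_nonneg.2 hts), abs_of_nonpos (by linarith)]
    ring
  · refine ⟨s + L, ⟨by linarith, by linarith⟩, t, ⟨ht₀, by linarith⟩, hper s, rfl, ?_⟩
    rw [circDist, min_eq_right h, abs_of_nonpos (sub_nonpos.2 hst), abs_of_nonneg (by linarith)]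
    ring

theorem circDist_eq_zero_of_apply_eq (hper : Periodic γ L) (hinj : InjOn γ (Ico 0 L))
    (hs : s ∈ Icc 0 L) (ht : t ∈ Icc 0 L) (h : γ s = γ t) : circDist L s t = 0 := by
  have hγL : γ L = γ 0 := by simpa using hper 0
  have hL : 0 ≤ L := hs.1.trans hs.2
  rcases hs.2.lt_or_eq with hsL | hsL <;> rcases ht.2.lt_or_eq with htL | htL
  · simp [circDist, hinj ⟨hs.1, hsL⟩ ⟨ht.1, htL⟩ h, hL]
  · have hs₀ : s = 0 := hinj ⟨hs.1, hsL⟩ ⟨le_rfl, hs.1.trans_lt hsL⟩ (by rw [h, htL, hγL])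
    simp [circDist, hs₀, htL, abs_of_nonneg hL, hL]
  · have ht₀ : t = 0 := hinj ⟨ht.1, htL⟩ ⟨le_rfl, ht.1.trans_lt htL⟩ (by rw [← h, hsL, hγL])
    simp [circDist, ht₀, hsL, abs_of_nonneg hL, hL]
  · simp [circDist, hsL, htL, hL]

end ClosedCurve

section ChordArc

variable {E : Type*} [NormedAddCommGroup E] {γ : ℝ → E} {L : ℝ}

theorem norm_sub_le_circDist (hγ : LipschitzWith 1 γ) (hper : Periodic γ L) {s t : ℝ}
    (hs : s ∈ Icc 0 L) (ht : t ∈ Icc 0 L) : ‖γ s - γ t‖ ≤ circDist L s t := by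
  obtain ⟨s', -, t', -, hs', ht', hd⟩ := hper.exists_lift_circDist hs ht
  rw [← hs', ← ht', ← hd, ← dist_eq_norm, ← Real.dist_eq]
  simpa using hγ.dist_le_mul s' t'

theorem exists_pos_mul_circDist_le_norm_sub [NormedSpace ℝ E] (hL : 0 < L) (hγ : ContDiff ℝ 1 γ)
    (hunit : ∀ s, ‖deriv γ s‖ = 1) (hper : Periodic γ L) (hinj : InjOn γ (Ico 0 L)) :
    ∃ c > 0, ∀ s ∈ Icc 0 L, ∀ t ∈ Icc 0 L, c * circDist L s t ≤ ‖γ s - γ t‖ := by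
  obtain ⟨δ, hδ, hnear⟩ := exists_pos_abs_sub_div_two_le_norm_sub hγ hunit 0 (2 * L)
  let K := {q ∈ Icc 0 L ×ˢ Icc 0 L | δ ≤ circDist L q.1 q.2}
  have hK : IsCompact K := (isCompact_Icc.prod isCompact_Icc).inter_right
    (isClosed_le continuous_const (continuous_circDist L))
  have hpos : ∀ q ∈ K, 0 < ‖γ q.1 - γ q.2‖ := fun q hq => norm_pos_iff.2 <| sub_ne_zero.2
    fun h => hδ.not_ge (circDist_eq_zero_of_apply_eq hper hinj hq.1.1 hq.1.2 h ▸ hq.2)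
  have hcont : Continuous fun q : ℝ × ℝ => ‖γ q.1 - γ q.2‖ := by
    have := hγ.continuous; fun_prop
  obtain ⟨m, hm, hmK⟩ := hK.exists_forall_le' hcont.continuousOn hpos
  refine ⟨min (1 / 2) (m / L), by positivity, fun s hs t ht => ?_⟩
  rcases lt_or_ge (circDist L s t) δ with hclose | hfar
  · obtain ⟨s', hs', t', ht', hγs, hγt, hd⟩ := hper.exists_lift_circDist hs ht
    calc min (1 / 2) (m / L) * circDist L s t ≤ 1 / 2 * circDist L s t :=
          mul_le_mul_of_nonneg_right (min_le_left _ _) (hd ▸ abs_nonneg _)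
      _ = |s' - t'| / 2 := by rw [hd]; ring
      _ ≤ ‖γ s' - γ t'‖ := hnear s' hs' t' ht' (hd ▸ hclose.le)
      _ = ‖γ s - γ t‖ := by rw [hγs, hγt]
  · calc min (1 / 2) (m / L) * circDist L s t ≤ m / L * L :=
          mul_le_mul (min_le_right _ _) (circDist_le L s t) (hδ.le.trans hfar) (by positivity)
      _ = m := div_mul_cancel₀ _ hL.ne'
      _ ≤ ‖γ s - γ t‖ := hmK (s, t) ⟨⟨hs, ht⟩, hfar⟩

end ChordArc

theorem log_chord_integrable
    (L : ℝ) (hL : 0 < L) (γ : ℝ → EuclideanSpace ℝ (Fin 3))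
    (hC1 : ContDiff ℝ 1 γ)
    (hper : ∀ s, γ (s + L) = γ s)
    (hunit : ∀ s, ‖deriv γ s‖ = 1)
    (hinj : Set.InjOn γ (Set.Ico 0 L)) :
    IntegrableOn (fun q : ℝ × ℝ => Real.log ‖γ q.1 - γ q.2‖)
      (Set.Icc 0 L ×ˢ Set.Icc 0 L) volume := by
  obtain ⟨c, hc, hlower⟩ := exists_pos_mul_circDist_le_norm_sub hL hC1 hunit hper hinj
  have hlip : LipschitzWith 1 γ :=
    lipschitzWith_of_nnnorm_deriv_le (hC1.differentiable one_ne_zero) fun s => by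
      rw [← NNReal.coe_le_coe, coe_nnnorm, hunit, NNReal.coe_one]
  have hconst : IntegrableOn (fun _ : ℝ × ℝ => |log c|) (Icc 0 L ×ˢ Icc 0 L) :=
    integrableOn_const (isCompact_Icc.prod isCompact_Icc).measure_lt_top.ne
  have hchord : Continuous fun q : ℝ × ℝ => ‖γ q.1 - γ q.2‖ := by
    have := hC1.continuous; fun_prop
  refine (hconst.add (integrableOn_log_circDist L).norm).mono'
    hchord.measurable.log.aestronglyMeasurable ?_
  filter_upwards [ae_restrict_mem (measurableSet_Icc.prod measurableSet_Icc)] with q ⟨hs, ht⟩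
  rcases (norm_nonneg (γ q.1 - γ q.2)).eq_or_lt with hzero | hpos
  · rw [← hzero, log_zero, norm_zero]
    exact add_nonneg (abs_nonneg _) (norm_nonneg _)
  · exact abs_log_le_of_mul_le_of_le hc hpos (hlower q.1 hs q.2 ht)
      (norm_sub_le_circDist hlip hper hs ht)
end

section
/- Let L > 0 and let γ : ℝ → ℝ³ be continuously differentiable and L-periodic with ‖γ'(s)‖ = 1 for all s, and injective on [0, L). Then for every p with −1 < p < 0, the function (s, t) ↦ ‖γ(s) − γ(t)‖^p is Lebesgue-integrable on [0, L] × [0, L], so the p-th mean chord integral ∫₀^L ∫₀^L ‖γ(s) − γ(t)‖^p ds dt is a finite positive number. -/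
/-!
Write `d_L(s, t) = ‖((s - t : ℝ) : AddCircle L)‖` for the distance on the parameter circle.
On short parameter intervals a unit-speed C¹ curve stays within half the arc length of its tangent
line, so `‖γ s - γ t‖ ≥ d_L(s, t) / 2` once `d_L(s, t) ≤ δ`; on the compact set of pairs of points
of the circle at distance at least `δ`, injectivity bounds the chord length below. Hence
`‖γ s - γ t‖ ≥ c d_L(s, t)`, and `‖γ s - γ t‖ ^ p ≤ c ^ p d_L(s, t) ^ p` for `p < 0`. The right-hand
side is a function of `s - t` whose profile `x ↦ ‖(x : AddCircle L)‖ ^ p` equals `|x| ^ p` on a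
period, which is locally integrable for `p > -1`; a locally integrable function of `s - t` is
locally integrable in `(s, t)`, being a convolution integrand. The integral is positive because
the integrand does not vanish on `[0, L/2) × [L/2, L)`.
-/

open MeasureTheory Real Set Function Metric

theorem exists_pos_mul_dist_le_dist_of_injective {X Y : Type*} [MetricSpace X] [CompactSpace X]
    [MetricSpace Y] {f : X → Y} (hf : Continuous f) (hinj : Injective f) {δ c₀ : ℝ}
    (hδ : 0 < δ) (hc₀ : 0 < c₀)
    (hloc : ∀ x y, dist x y ≤ δ → c₀ * dist x y ≤ dist (f x) (f y)) :
    ∃ c > 0, ∀ x y, c * dist x y ≤ dist (f x) (f y) := by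
  have hK : IsCompact {q : X × X | δ ≤ dist q.1 q.2} :=
    (isClosed_le continuous_const continuous_dist).isCompact
  obtain ⟨ε, hε, hεle⟩ := hK.exists_forall_le' (a := 0)
    ((hf.comp continuous_fst).dist (hf.comp continuous_snd)).continuousOn
    fun q hq => dist_pos.2 (hinj.ne (dist_pos.1 (hδ.trans_le hq)))
  obtain ⟨D, hD⟩ := isBounded_iff.1 (isBounded_of_compactSpace (s := (univ : Set X)))
  have hDδ : 0 < max D δ := lt_max_of_lt_right hδ
  refine ⟨min c₀ (ε / max D δ), lt_min hc₀ (div_pos hε hDδ), fun x y => ?_⟩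
  rcases le_total (dist x y) δ with hxy | hxy
  · exact (mul_le_mul_of_nonneg_right (min_le_left _ _) dist_nonneg).trans (hloc x y hxy)
  · calc min c₀ (ε / max D δ) * dist x y ≤ ε / max D δ * max D δ := by
          gcongr
          · exact min_le_right _ _
          · exact (hD (mem_univ x) (mem_univ y)).trans (le_max_left _ _)
      _ = ε := div_mul_cancel₀ _ hDδ.ne'
      _ ≤ dist (f x) (f y) := hεle (x, y) hxy

theorem AddCircle.exists_mem_Ico_coe_eq {L : ℝ} (hL : 0 < L) (x : AddCircle L) :
    ∃ u ∈ Ico 0 L, (u : AddCircle L) = x := by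
  have := Fact.mk hL
  exact ⟨equivIco L 0 x, by simpa using (equivIco L 0 x).2, coe_equivIco⟩

theorem Function.Periodic.injective_lift {α : Type*} {f : ℝ → α} {L : ℝ} (hL : 0 < L)
    (hper : Periodic f L) (hinj : InjOn f (Ico 0 L)) : Injective hper.lift := by
  intro x y hxy
  obtain ⟨u, hu, rfl⟩ := AddCircle.exists_mem_Ico_coe_eq hL x
  obtain ⟨v, hv, rfl⟩ := AddCircle.exists_mem_Ico_coe_eq hL y
  exact congrArg _ (hinj hu hv hxy)

theorem Function.Periodic.uniformContinuous {α : Type*} [UniformSpace α] {f : ℝ → α} {L : ℝ}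
    (hL : 0 < L) (hper : Periodic f L) (hf : Continuous f) : UniformContinuous f := by
  have := Fact.mk hL
  have hmk : UniformContinuous ((↑) : ℝ → AddCircle L) :=
    (LipschitzWith.of_dist_le_mul (K := 1) fun x y => by
      rw [dist_eq_norm, dist_eq_norm, ← AddCircle.coe_sub, NNReal.coe_one, one_mul]
      exact QuotientAddGroup.norm_mk_le_norm).uniformContinuous
  have hlift : UniformContinuous hper.lift :=
    CompactSpace.uniformContinuous_of_continuous (continuous_quot_lift _ hf)
  exact hlift.comp hmk

theorem exists_pos_half_dist_le_dist_of_uniformContinuous_deriv {E : Type*}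
    [NormedAddCommGroup E] [NormedSpace ℝ E] {γ : ℝ → E} (hγ : Differentiable ℝ γ)
    (hγ' : UniformContinuous (deriv γ)) (hspeed : ∀ s, 1 ≤ ‖deriv γ s‖) :
    ∃ δ > 0, ∀ s t, dist s t ≤ δ → 1 / 2 * dist s t ≤ dist (γ s) (γ t) := by
  obtain ⟨δ, hδ, hclose⟩ := uniformContinuous_iff.1 hγ' (1 / 2) (by norm_num)
  refine ⟨δ / 2, by positivity, fun s t hst => ?_⟩
  have hderiv : ∀ u, HasDerivAt (fun u => γ u - (u - t) • deriv γ t)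
      (deriv γ u - deriv γ t) u := fun u =>
    ((hγ u).hasDerivAt.sub (((hasDerivAt_id u).sub_const t).smul_const (deriv γ t))).congr_deriv
      (by rw [one_smul])
  have htangent : ‖γ s - γ t - (s - t) • deriv γ t‖ ≤ 1 / 2 * ‖s - t‖ := by
    have := (convex_closedBall t (δ / 2)).norm_image_sub_le_of_norm_hasDerivWithin_le
      (fun u _ => (hderiv u).hasDerivWithinAt)
      (fun u hu => by
        simpa only [dist_eq_norm] using (hclose ((mem_closedBall.1 hu).trans_lt (by linarith))).le)
      (mem_closedBall_self (by positivity)) (mem_closedBall.2 hst)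
    rwa [sub_self, zero_smul, sub_zero, sub_sub, add_comm, ← sub_sub] at this
  have hlin : ‖s - t‖ ≤ ‖(s - t) • deriv γ t‖ := by
    rw [norm_smul]
    exact le_mul_of_one_le_right (norm_nonneg _) (hspeed t)
  have htri := norm_sub_norm_le ((s - t) • deriv γ t) (γ s - γ t)
  rw [norm_sub_rev ((s - t) • deriv γ t)] at htri
  rw [dist_eq_norm, dist_eq_norm]
  linarith

theorem exists_pos_mul_norm_coe_sub_le_norm_sub {E : Type*} [NormedAddCommGroup E]
    [NormedSpace ℝ E] {L : ℝ} (hL : 0 < L) {γ : ℝ → E} (hγ : ContDiff ℝ 1 γ) (hper : Periodic γ L)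
    (hspeed : ∀ s, 1 ≤ ‖deriv γ s‖) (hinj : InjOn γ (Ico 0 L)) :
    ∃ c > 0, ∀ s t, c * ‖((s - t : ℝ) : AddCircle L)‖ ≤ ‖γ s - γ t‖ := by
  have := Fact.mk hL
  have hper' : Periodic (deriv γ) L := fun s => by rw [← deriv_comp_add_const, hper.funext]
  obtain ⟨δ, hδ, hloc⟩ := exists_pos_half_dist_le_dist_of_uniformContinuous_deriv
    (hγ.differentiable one_ne_zero) (hper'.uniformContinuous hL (hγ.continuous_deriv le_rfl))
    hspeed
  have hloc_circle : ∀ x y : AddCircle L, dist x y ≤ δ →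
      1 / 2 * dist x y ≤ dist (hper.lift x) (hper.lift y) := by
    rintro ⟨s⟩ ⟨t⟩ hst
    -- `s'` is the representative of `s` closest to `t`
    set s' := s - round (L⁻¹ * (s - t)) * L
    have hdist : dist (s : AddCircle L) t = dist s' t := by
      rw [dist_eq_norm, ← AddCircle.coe_sub, AddCircle.norm_eq, Real.dist_eq, sub_right_comm]
    change dist (s : AddCircle L) t ≤ δ at hst
    change 1 / 2 * dist (s : AddCircle L) t ≤ dist (γ s) (γ t)
    rw [hdist] at hst ⊢
    rw [← hper.sub_int_mul_eq (round (L⁻¹ * (s - t)))]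
    exact hloc s' t hst
  obtain ⟨c, hc, hglobal⟩ := exists_pos_mul_dist_le_dist_of_injective
    (continuous_quot_lift _ hγ.continuous) (hper.injective_lift hL hinj) hδ (by norm_num) hloc_circle
  refine ⟨c, hc, fun s t => ?_⟩
  simpa [dist_eq_norm] using hglobal s t

theorem Function.Periodic.locallyIntegrable {E : Type*} [NormedAddCommGroup E] {f : ℝ → E}
    {T t : ℝ} (hf : Periodic f T) (hT : T ≠ 0) (h : IntervalIntegrable f volume t (t + T)) :
    LocallyIntegrable f volume := by
  refine locallyIntegrable_iff.2 fun K hK => ?_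
  have hint := hf.intervalIntegrable hT h (sInf K) (sSup K)
  exact ((intervalIntegrable_iff' (f := f)).1 hint).mono_set
    (hK.isBounded.subset_Icc_sInf_sSup.trans Icc_subset_uIcc)

theorem locallyIntegrable_abs_rpow {p : ℝ} (hp : -1 < p) :
    LocallyIntegrable (fun x : ℝ => |x| ^ p) volume :=
  locallyIntegrable_of_norm_le_rpow (by simp) (α := -p) (C := 1) (by simp; linarith)
    (ae_of_all _ fun x => by simp [abs_of_nonneg (rpow_nonneg (abs_nonneg x) p)])
    (continuous_abs.measurable.pow_const p).aestronglyMeasurable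

theorem AddCircle.locallyIntegrable_norm_coe_rpow {L p : ℝ} (hL : 0 < L) (hp : -1 < p) :
    LocallyIntegrable (fun x : ℝ => ‖(x : AddCircle L)‖ ^ p) volume := by
  have hper : Periodic (fun x : ℝ => ‖(x : AddCircle L)‖ ^ p) L := fun x => by
    simp only [AddCircle.coe_add_period]
  refine hper.locallyIntegrable hL.ne' (t := -(L / 2)) ?_
  refine IntegrableOn.intervalIntegrable (((locallyIntegrable_abs_rpow hp).integrableOn_isCompact
    isCompact_uIcc).congr_fun (fun x hx => ?_) measurableSet_uIcc)
  rw [uIcc_of_le (by linarith), mem_Icc] at hx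
  rw [(AddCircle.norm_coe_eq_abs_iff L hL.ne').2]
  rw [abs_le, abs_of_pos hL]
  constructor <;> linarith

theorem MeasureTheory.LocallyIntegrable.comp_fst_sub_snd {G E : Type*} [AddGroup G]
    [TopologicalSpace G] [IsTopologicalAddGroup G] [LocallyCompactSpace G] [T2Space G]
    [SecondCountableTopology G] [MeasurableSpace G] [BorelSpace G] {μ : Measure G}
    [μ.IsAddRightInvariant] [IsFiniteMeasureOnCompacts μ] [NormedAddCommGroup E]
    [NormedSpace ℝ E] {g : G → E} (hg : LocallyIntegrable g μ) :
    LocallyIntegrable (fun q : G × G => g (q.1 - q.2)) (μ.prod μ) := by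
  refine locallyIntegrable_iff.2 fun K hK => ?_
  have hK₂ := hK.image continuous_snd
  have hD := hK.image (continuous_fst.sub continuous_snd)
  have hgD : Integrable (((fun q : G × G => q.1 - q.2) '' K).indicator g) μ :=
    (hg.integrableOn_isCompact hD).integrable_indicator hD.measurableSet
  have h1 : Integrable ((Prod.snd '' K).indicator fun _ => (1 : ℝ)) μ :=
    (integrableOn_const hK₂.measure_ne_top).integrable_indicator hK₂.measurableSet
  refine ((h1.convolution_integrand (ContinuousLinearMap.lsmul ℝ ℝ) hgD).integrableOn
    (s := K)).congr_fun (fun q hq => ?_) hK.measurableSet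
  simp [indicator_of_mem (mem_image_of_mem Prod.snd hq),
    indicator_of_mem (mem_image_of_mem (fun q : G × G => q.1 - q.2) hq)]

theorem rpow_le_rpow_mul_rpow_of_mul_le {a b c p : ℝ} (hc : 0 < c) (ha : 0 ≤ a)
    (hab : c * a ≤ b) (hzero : a = 0 → b = 0) (hp : p < 0) : b ^ p ≤ c ^ p * a ^ p := by
  rcases ha.eq_or_lt with rfl | ha
  · rw [hzero rfl, zero_rpow hp.ne, mul_zero]
  · rw [← mul_rpow hc.le ha.le]
    exact rpow_le_rpow_of_nonpos (mul_pos hc ha) hab hp.le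

theorem setIntegral_norm_sub_rpow_pos {E : Type*} [NormedAddCommGroup E] {L p : ℝ} (hL : 0 < L)
    {γ : ℝ → E} (hinj : InjOn γ (Ico 0 L))
    (hint : IntegrableOn (fun q : ℝ × ℝ => ‖γ q.1 - γ q.2‖ ^ p) (Icc 0 L ×ˢ Icc 0 L)) :
    0 < ∫ q in Icc 0 L ×ˢ Icc 0 L, ‖γ q.1 - γ q.2‖ ^ p := by
  rw [setIntegral_pos_iff_support_of_nonneg_ae
    (ae_of_all _ fun q => rpow_nonneg (norm_nonneg _) p) hint]
  have hsquare : Ico 0 (L / 2) ×ˢ Ico (L / 2) L ⊆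
      support (fun q : ℝ × ℝ => ‖γ q.1 - γ q.2‖ ^ p) ∩ Icc 0 L ×ˢ Icc 0 L := by
    rintro ⟨s, t⟩ ⟨⟨hs₀, hs⟩, ⟨ht₀, ht⟩⟩
    have hne : γ s ≠ γ t := hinj.ne ⟨hs₀, by linarith⟩ ⟨by linarith, ht⟩ (by linarith)
    exact ⟨(rpow_pos_of_pos (norm_pos_iff.2 (sub_ne_zero.2 hne)) p).ne',
      ⟨hs₀, by linarith⟩, ⟨by linarith, ht.le⟩⟩
  refine lt_of_lt_of_le ?_ (measure_mono hsquare)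
  rw [Measure.volume_eq_prod, Measure.prod_prod, Real.volume_Ico, Real.volume_Ico]
  exact ENNReal.mul_pos (by simp; linarith) (by simp; linarith)

theorem negative_power_chord_integrable
    (L : ℝ) (hL : 0 < L) (γ : ℝ → EuclideanSpace ℝ (Fin 3))
    (hC1 : ContDiff ℝ 1 γ)
    (hper : ∀ s, γ (s + L) = γ s)
    (hunit : ∀ s, ‖deriv γ s‖ = 1)
    (hinj : Set.InjOn γ (Set.Ico 0 L))
    (p : ℝ) (hp : p ∈ Set.Ioo (-1 : ℝ) 0) :
    IntegrableOn (fun q : ℝ × ℝ => ‖γ q.1 - γ q.2‖ ^ p)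
        (Set.Icc 0 L ×ˢ Set.Icc 0 L) volume ∧
      0 < ∫ q in Set.Icc 0 L ×ˢ Set.Icc 0 L, ‖γ q.1 - γ q.2‖ ^ p := by
  obtain ⟨c, hc, hchord⟩ :=
    exists_pos_mul_norm_coe_sub_le_norm_sub hL hC1 hper (fun s => (hunit s).ge) hinj
  have hkernel : IntegrableOn (fun q : ℝ × ℝ => ‖((q.1 - q.2 : ℝ) : AddCircle L)‖ ^ p)
      (Icc 0 L ×ˢ Icc 0 L) := by
    rw [Measure.volume_eq_prod]
    exact (AddCircle.locallyIntegrable_norm_coe_rpow hL hp.1).comp_fst_sub_snd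
      |>.integrableOn_isCompact (isCompact_Icc.prod isCompact_Icc)
  have hbound : ∀ s t, ‖γ s - γ t‖ ^ p ≤ c ^ p * ‖((s - t : ℝ) : AddCircle L)‖ ^ p :=
    fun s t => rpow_le_rpow_mul_rpow_of_mul_le hc (norm_nonneg _) (hchord s t) (fun h => by
      rw [norm_eq_zero, AddCircle.coe_sub, sub_eq_zero] at h
      rw [← Periodic.lift_coe hper s, ← Periodic.lift_coe hper t, h, sub_self, norm_zero]) hp.2
  have hint : IntegrableOn (fun q : ℝ × ℝ => ‖γ q.1 - γ q.2‖ ^ p) (Icc 0 L ×ˢ Icc 0 L) :=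
    (hkernel.const_mul (c ^ p)).mono'
      (((hC1.continuous.comp continuous_fst).sub
        (hC1.continuous.comp continuous_snd)).norm.measurable.pow_const p).aestronglyMeasurable
      (ae_of_all _ fun q => by
        rw [Real.norm_of_nonneg (rpow_nonneg (norm_nonneg _) p)]
        exact hbound q.1 q.2)
  exact ⟨hint, setIntegral_norm_sub_rpow_pos hL hinj hint⟩
end
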